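/- For every MBSP instance and every valid schedule of that instance, the asynchronous cost of the schedule is at least the maximum, over all directed paths (w_1,…,w_k) in G, of Σ_{i : w_i is not a source of G} ω(w_i). -/

import Mathlib

namespace MBSP

/-- A transition (pebbling move) of a single processor. -/
inductive Op (ν : Type) where
  | load : ν → Op ν
  | save : ν → Op ν
  | compute : ν → Op ν
  | delete : ν → Op ν
deriving DecidableEq

/-- An MBSP instance: a DAG with compute weights `ω`, memory weights `μ`,
`P` processors, cache capacity `r`, communication cost `g` and synchronization cost `L`. -/
structure Inst (ν : Type) where
  edge : ν → ν → Prop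
  ω : ν → ℝ
  μ : ν → ℝ
  P : ℕ
  r : ℝ
  g : ℝ
  L : ℝ

variable {ν : Type} [DecidableEq ν]

def isSource (I : Inst ν) (v : ν) : Prop := ¬ ∃ u, I.edge u v

def isSink (I : Inst ν) (v : ν) : Prop := ¬ ∃ u, I.edge v u

def Acyclic (I : Inst ν) : Prop := ∀ v, ¬ Relation.TransGen I.edge v v

def opCost (I : Inst ν) : Op ν → ℝ
  | .load v => I.μ v * I.g
  | .save v => I.μ v * I.g
  | .compute v => I.ω v
  | .delete _ => 0

def applyOp (R B : Finset ν) : Op ν → Finset ν × Finset ν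
  | .load v => (insert v R, B)
  | .save v => (R, insert v B)
  | .compute v => (insert v R, B)
  | .delete v => (R.erase v, B)

def opOK (I : Inst ν) (R B : Finset ν) : Op ν → Prop
  | .load v => v ∈ B
  | .save v => v ∈ R
  | .compute v => (∃ u, I.edge u v) ∧ ∀ u, I.edge u v → u ∈ R
  | .delete _ => True

/-- The memory bound for a cache content `R`. -/
def memOK (I : Inst ν) (R : Finset ν) : Prop := ∑ v ∈ R, I.μ v ≤ I.r

/-- Run a sequence of transitions of one processor on a pair (cache, slow memory). -/
def run (R B : Finset ν) : List (Op ν) → Finset ν × Finset ν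
  | [] => (R, B)
  | op :: rest => run (applyOp R B op).1 (applyOp R B op).2 rest

/-- Validity of a sequence of transitions of one processor: every precondition holds
when the transition is applied and the memory bound holds throughout. -/
def seqValid (I : Inst ν) (R B : Finset ν) : List (Op ν) → Prop
  | [] => True
  | op :: rest => opOK I R B op ∧ memOK I (applyOp R B op).1 ∧
      seqValid I (applyOp R B op).1 (applyOp R B op).2 rest

/-- A superstep: for every processor, a compute phase (computes and deletes),
then a save phase, a delete phase and a load phase. -/
structure Superstep (ν : Type) (P : ℕ) where
  comp : Fin P → List (Op ν)
  save : Fin P → List ν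
  del : Fin P → List ν
  load : Fin P → List ν

structure Config (ν : Type) (P : ℕ) where
  R : Fin P → Finset ν
  B : Finset ν

abbrev Schedule (ν : Type) (P : ℕ) := List (Superstep ν P)

variable {P : ℕ}

def compOnly (l : List (Op ν)) : Prop :=
  ∀ op ∈ l, (∃ v, op = Op.compute v) ∨ (∃ v, op = Op.delete v)

def afterComp (c : Config ν P) (S : Superstep ν P) (p : Fin P) : Finset ν :=
  (run (c.R p) c.B (S.comp p)).1

/-- The shared slow memory after the save phases of all processors. -/
def newB (c : Config ν P) (S : Superstep ν P) : Finset ν :=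
  c.B ∪ Finset.univ.biUnion (fun p => (S.save p).toFinset)

def afterDel (c : Config ν P) (S : Superstep ν P) (p : Fin P) : Finset ν :=
  (S.del p).foldl Finset.erase (afterComp c S p)

def afterLoad (c : Config ν P) (S : Superstep ν P) (p : Fin P) : Finset ν :=
  afterDel c S p ∪ (S.load p).toFinset

/-- The configuration reached after executing a superstep. -/
def stepConfig (c : Config ν P) (S : Superstep ν P) : Config ν P :=
  ⟨fun p => afterLoad c S p, newB c S⟩

/-- Validity of a superstep at a configuration. -/
def ssValid (I : Inst ν) (c : Config ν I.P) (S : Superstep ν I.P) : Prop :=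
  (∀ p, compOnly (S.comp p)) ∧
  (∀ p, seqValid I (c.R p) c.B (S.comp p)) ∧
  (∀ p, ∀ v ∈ S.save p, v ∈ afterComp c S p) ∧
  (∀ p, ∀ v ∈ S.load p, v ∈ newB c S) ∧
  (∀ p, memOK I (afterLoad c S p))

def runSched (c : Config ν P) : Schedule ν P → Config ν P
  | [] => c
  | S :: rest => runSched (stepConfig c S) rest

def schedValidFrom (I : Inst ν) (c : Config ν I.P) : Schedule ν I.P → Prop
  | [] => True
  | S :: rest => ssValid I c S ∧ schedValidFrom I (stepConfig c S) rest

/-- `B` is exactly the set of sources of the DAG. -/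
def initB (I : Inst ν) (B : Finset ν) : Prop := ∀ v, v ∈ B ↔ isSource I v

/-- A valid MBSP schedule: starts with empty caches and the sources in slow memory,
every transition is legal and the memory bound holds throughout, and at the end
every sink is in slow memory. -/
def Valid (I : Inst ν) (sched : Schedule ν I.P) : Prop :=
  ∃ B0 : Finset ν, initB I B0 ∧
    schedValidFrom I ⟨fun _ => ∅, B0⟩ sched ∧
    ∀ v, isSink I v → v ∈ (runSched (⟨fun _ => ∅, B0⟩ : Config ν I.P) sched).B

def listCost (I : Inst ν) (l : List (Op ν)) : ℝ := (l.map (opCost I)).sum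

def ioCost (I : Inst ν) (l : List ν) : ℝ := (l.map (fun v => I.μ v * I.g)).sum

/-- The synchronous cost of a superstep. -/
noncomputable def ssCost (I : Inst ν) (S : Superstep ν I.P) : ℝ :=
  (⨆ p : Fin I.P, listCost I (S.comp p)) + (⨆ p : Fin I.P, ioCost I (S.save p)) +
    (⨆ p : Fin I.P, ioCost I (S.load p)) + I.L

/-- The synchronous cost of a schedule. -/
noncomputable def syncCost (I : Inst ν) (sched : Schedule ν I.P) : ℝ :=
  (sched.map (ssCost I)).sum

/-- Finishing times of the saves in a save phase starting at time `t`. -/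
def saveFinishes (I : Inst ν) : ℝ → List ν → List (ν × ℝ)
  | _, [] => []
  | t, v :: rest => (v, t + I.μ v * I.g) :: saveFinishes I (t + I.μ v * I.g) rest

def minSaveTime (entries : List (ν × ℝ)) (v : ν) : Option ℝ :=
  ((entries.filter (fun e => e.1 == v)).map Prod.snd).min?

/-- Finishing time of a load phase: each load waits for the value to be available
in slow memory (time `Γ v`). -/
def loadFold (I : Inst ν) (Γ : ν → Option ℝ) : ℝ → List ν → ℝ
  | t, [] => t
  | t, v :: rest => loadFold I Γ (max t ((Γ v).getD 0) + I.μ v * I.g) rest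

/-- One superstep of the asynchronous execution: updates the finishing time of
every processor and the availability times `Γ` of the values in slow memory. -/
def asyncSS (I : Inst ν) (S : Superstep ν I.P)
    (st : (Fin I.P → ℝ) × (ν → Option ℝ)) : (Fin I.P → ℝ) × (ν → Option ℝ) :=
  let t1 : Fin I.P → ℝ := fun p => st.1 p + listCost I (S.comp p)
  let entries : List (ν × ℝ) :=
    ((List.finRange I.P).map (fun p => saveFinishes I (t1 p) (S.save p))).flatten
  let Γ' : ν → Option ℝ := fun v => (st.2 v).orElse (fun _ => minSaveTime entries v)
  let t2 : Fin I.P → ℝ := fun p => t1 p + ioCost I (S.save p)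
  (fun p => loadFold I Γ' (t2 p) (S.load p), Γ')

def asyncRun (I : Inst ν) (st : (Fin I.P → ℝ) × (ν → Option ℝ)) :
    Schedule ν I.P → (Fin I.P → ℝ) × (ν → Option ℝ)
  | [] => st
  | S :: rest => asyncRun I (asyncSS I S st) rest

/-- The asynchronous cost (makespan) of a schedule. -/
noncomputable def asyncCost (I : Inst ν) (sched : Schedule ν I.P) : ℝ :=
  ⨆ p : Fin I.P, (asyncRun I (fun _ => (0 : ℝ), fun _ => none) sched).1 p

end MBSP

namespace MBSP

/-!
Let `W v` be the heaviest weight of a path ending in `v`, counting only non-source nodes.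
Along the asynchronous execution, a value held in a processor's cache at time `t` has
`W ≤ t`, and a value in slow memory becomes available no earlier than its `W`: a computation
of `v` needs all parents of `v` in cache and then takes `ω v` more time, while saves and loads
only add delay. Every path extends to a sink, and a sink ends up in slow memory, so the
weight of the path is at most the finishing time of some processor.
-/

theorem wellFounded_of_forall_not_transGen_self {α : Type*} [Finite α] {r : α → α → Prop}
    (h : ∀ a, ¬ Relation.TransGen r a a) : WellFounded r :=
  haveI : IsTrans α (Relation.TransGen r) := ⟨fun _ _ _ => Relation.TransGen.trans⟩
  haveI : Std.Irrefl (Relation.TransGen r) := ⟨h⟩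
  Subrelation.wf Relation.TransGen.single (Finite.wellFounded_of_trans_of_irrefl _)

section PathWeight

variable {ν : Type} {I : Inst ν}

theorem Acyclic.wellFounded [Finite ν] (hac : Acyclic I) : WellFounded I.edge :=
  wellFounded_of_forall_not_transGen_self hac

theorem Acyclic.wellFounded_swap [Finite ν] (hac : Acyclic I) :
    WellFounded (Function.swap I.edge) :=
  wellFounded_of_forall_not_transGen_self fun v h => hac v (Relation.transGen_swap.mp h)

/-- The empty supremum over the parents of a source is `0` (a junk value of `⨆` on `ℝ`
that is exactly the right one here). -/
noncomputable def maxPathWeight (I : Inst ν) (hwf : WellFounded I.edge) : ν → ℝ :=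
  hwf.fix fun v W => {x | ¬ isSource I x}.indicator I.ω v + ⨆ u : {u // I.edge u v}, W u u.2

variable (hwf : WellFounded I.edge)

theorem maxPathWeight_eq (v : ν) :
    maxPathWeight I hwf v =
      {x | ¬ isSource I x}.indicator I.ω v + ⨆ u : {u // I.edge u v}, maxPathWeight I hwf u :=
  hwf.fix_eq _ v

theorem maxPathWeight_nonneg (hω : ∀ v, 0 ≤ I.ω v) (v : ν) : 0 ≤ maxPathWeight I hwf v := by
  induction v using hwf.induction with
  | _ v ih =>
    rw [maxPathWeight_eq]
    exact add_nonneg (Set.indicator_nonneg (fun x _ => hω x) v)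
      (Real.iSup_nonneg fun u => ih u u.2)

theorem indicator_le_maxPathWeight (hω : ∀ v, 0 ≤ I.ω v) (v : ν) :
    {x | ¬ isSource I x}.indicator I.ω v ≤ maxPathWeight I hwf v := by
  rw [maxPathWeight_eq]
  exact le_add_of_nonneg_right (Real.iSup_nonneg fun u => maxPathWeight_nonneg hwf hω u)

theorem maxPathWeight_of_isSource {v : ν} (hv : isSource I v) : maxPathWeight I hwf v = 0 := by
  have : IsEmpty {u // I.edge u v} := ⟨fun u => hv ⟨u, u.2⟩⟩
  rw [maxPathWeight_eq, Real.iSup_of_isEmpty, add_zero]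
  exact Set.indicator_of_notMem (show v ∉ {x | ¬ isSource I x} from fun h => h hv) _

theorem maxPathWeight_le_of_parents_le {v : ν} {t : ℝ} (hv : ∃ u, I.edge u v)
    (hpar : ∀ u, I.edge u v → maxPathWeight I hwf u ≤ t) :
    maxPathWeight I hwf v ≤ I.ω v + t := by
  obtain ⟨u, hu⟩ := hv
  have : Nonempty {u // I.edge u v} := ⟨⟨u, hu⟩⟩
  rw [maxPathWeight_eq, Set.indicator_of_mem (not_not.mpr ⟨u, hu⟩)]
  exact add_le_add_right (ciSup_le fun w : {u // I.edge u v} => hpar w w.2) _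

theorem maxPathWeight_add_le_of_edge [Finite ν] {u v : ν} (h : I.edge u v) :
    maxPathWeight I hwf u + I.ω v ≤ maxPathWeight I hwf v := by
  rw [maxPathWeight_eq hwf v, Set.indicator_of_mem (not_not.mpr ⟨u, h⟩), add_comm]
  exact add_le_add_right
    (le_ciSup (f := fun w : {u // I.edge u v} => maxPathWeight I hwf w)
      (Set.finite_range _).bddAbove ⟨u, h⟩) _

theorem maxPathWeight_add_sum_le [Finite ν] {v : ν} {l : List ν}
    (hchain : (v :: l).IsChain I.edge) :
    maxPathWeight I hwf v + (l.map ({x | ¬ isSource I x}.indicator I.ω)).sum ≤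
      maxPathWeight I hwf (l.getLastD v) := by
  induction l generalizing v with
  | nil => simp
  | cons w l ih =>
    obtain ⟨hvw, hchain⟩ := List.isChain_cons_cons.mp hchain
    have hw := maxPathWeight_add_le_of_edge hwf hvw
    rw [List.map_cons, List.sum_cons, Set.indicator_of_mem (not_not.mpr ⟨v, hvw⟩),
      List.getLastD_cons]
    linarith [ih hchain]

theorem sum_indicator_le_maxPathWeight [Finite ν] (hω : ∀ v, 0 ≤ I.ω v) {v : ν} {l : List ν}
    (hchain : (v :: l).IsChain I.edge) :
    ((v :: l).map ({x | ¬ isSource I x}.indicator I.ω)).sum ≤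
      maxPathWeight I hwf (l.getLastD v) := by
  rw [List.map_cons, List.sum_cons]
  linarith [indicator_le_maxPathWeight hwf hω v, maxPathWeight_add_sum_le hwf hchain]

theorem exists_isSink_maxPathWeight_le [Finite ν] (hswf : WellFounded (Function.swap I.edge))
    (hω : ∀ v, 0 ≤ I.ω v) (v : ν) :
    ∃ s, isSink I s ∧ maxPathWeight I hwf v ≤ maxPathWeight I hwf s := by
  induction v using hswf.induction with
  | _ v ih =>
    by_cases hv : isSink I v
    · exact ⟨v, hv, le_rfl⟩
    · obtain ⟨u, hu⟩ := not_not.mp hv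
      obtain ⟨s, hs, hle⟩ := ih u hu
      exact ⟨s, hs, by linarith [maxPathWeight_add_le_of_edge hwf hu, hω u]⟩

end PathWeight

/-- `f v` is a lower bound for the time at which `v` can first be held by any processor. -/
structure IsReadyTimeBound {ν : Type} (I : Inst ν) (f : ν → ℝ) : Prop where
  le_zero_of_isSource : ∀ v, isSource I v → f v ≤ 0
  le_of_parents_le : ∀ v t, (∃ u, I.edge u v) → (∀ u, I.edge u v → f u ≤ t) → f v ≤ I.ω v + t

theorem isReadyTimeBound_maxPathWeight {ν : Type} {I : Inst ν} (hwf : WellFounded I.edge) :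
    IsReadyTimeBound I (maxPathWeight I hwf) :=
  ⟨fun _ hv => (maxPathWeight_of_isSource hwf hv).le,
    fun _ _ hv hpar => maxPathWeight_le_of_parents_le hwf hv hpar⟩

theorem foldl_erase_subset {α : Type*} [DecidableEq α] (l : List α) (s : Finset α) :
    l.foldl Finset.erase s ⊆ s := by
  induction l generalizing s with
  | nil => exact subset_rfl
  | cons a l ih => exact (ih _).trans (Finset.erase_subset a s)

section Schedule

variable {ν : Type} {I : Inst ν}

theorem opCost_nonneg (hω : ∀ v, 0 ≤ I.ω v) (hμ : ∀ v, 0 ≤ I.μ v) (hg : 0 ≤ I.g) (op : Op ν) :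
    0 ≤ opCost I op := by
  cases op with
  | load v | save v => exact mul_nonneg (hμ v) hg
  | compute v => exact hω v
  | delete v => exact le_rfl

theorem listCost_nonneg (hω : ∀ v, 0 ≤ I.ω v) (hμ : ∀ v, 0 ≤ I.μ v) (hg : 0 ≤ I.g)
    (l : List (Op ν)) : 0 ≤ listCost I l :=
  List.sum_nonneg <| List.forall_mem_map.mpr fun op _ => opCost_nonneg hω hμ hg op

theorem ioCost_nonneg (hμ : ∀ v, 0 ≤ I.μ v) (hg : 0 ≤ I.g) (l : List ν) : 0 ≤ ioCost I l :=
  List.sum_nonneg <| List.forall_mem_map.mpr fun v _ => mul_nonneg (hμ v) hg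

theorem le_run_add_listCost [DecidableEq ν] (hω : ∀ v, 0 ≤ I.ω v) {f : ν → ℝ}
    (hf : IsReadyTimeBound I f) {l : List (Op ν)} {R B : Finset ν} {t : ℝ} (hl : compOnly l)
    (hvalid : seqValid I R B l) (hR : ∀ v ∈ R, f v ≤ t) :
    ∀ v ∈ (run R B l).1, f v ≤ t + listCost I l := by
  induction l generalizing R B t with
  | nil => simpa [run, listCost] using hR
  | cons op l ih =>
    obtain ⟨hok, -, hvalid⟩ := hvalid
    have hl' : compOnly l := fun o ho => hl o (List.mem_cons_of_mem _ ho)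
    rcases hl op List.mem_cons_self with ⟨w, rfl⟩ | ⟨w, rfl⟩
    · have hcost : listCost I (.compute w :: l) = I.ω w + listCost I l := List.sum_cons
      have hR' : ∀ v ∈ insert w R, f v ≤ t + I.ω w := by
        intro v hv
        rcases Finset.mem_insert.mp hv with rfl | hv
        · linarith [hf.le_of_parents_le v t hok.1 fun u hu => hR u (hok.2 u hu)]
        · linarith [hR v hv, hω w]
      intro v hv
      linarith [ih hl' hvalid hR' v hv]
    · have hcost : listCost I (.delete w :: l) = 0 + listCost I l := List.sum_cons
      intro v hv
      linarith [ih hl' hvalid (fun v hv => hR v (Finset.mem_of_mem_erase hv)) v hv]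

theorem map_fst_saveFinishes (t : ℝ) (l : List ν) : (saveFinishes I t l).map Prod.fst = l := by
  induction l generalizing t with
  | nil => rfl
  | cons v l ih => exact congrArg (v :: ·) (ih _)

theorem snd_mem_Icc_of_mem_saveFinishes (hμ : ∀ v, 0 ≤ I.μ v) (hg : 0 ≤ I.g) {t : ℝ}
    {l : List ν} {e : ν × ℝ} (he : e ∈ saveFinishes I t l) :
    e.2 ∈ Set.Icc t (t + ioCost I l) := by
  induction l generalizing t with
  | nil => simp [saveFinishes] at he
  | cons v l ih =>
    have hv := mul_nonneg (hμ v) hg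
    have hcost : ioCost I (v :: l) = I.μ v * I.g + ioCost I l := List.sum_cons
    rcases List.mem_cons.mp he with rfl | he
    · exact ⟨by simpa using hv, by simpa [hcost] using ioCost_nonneg hμ hg l⟩
    · obtain ⟨hlo, hhi⟩ := ih he
      exact ⟨by linarith, by linarith⟩

theorem mem_of_minSaveTime_eq_some [DecidableEq ν] {entries : List (ν × ℝ)} {v : ν} {t : ℝ}
    (h : minSaveTime entries v = some t) : (v, t) ∈ entries := by
  obtain ⟨e, he, rfl⟩ := List.mem_map.mp (List.min?_mem h)
  obtain ⟨he, hv⟩ := List.mem_filter.mp he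
  rwa [← beq_iff_eq.mp hv]

theorem minSaveTime_eq_none_iff [DecidableEq ν] {entries : List (ν × ℝ)} {v : ν} :
    minSaveTime entries v = none ↔ ∀ e ∈ entries, e.1 ≠ v := by
  simp [minSaveTime, Prod.forall]

theorem le_loadFold (hμ : ∀ v, 0 ≤ I.μ v) (hg : 0 ≤ I.g) {Γ : ν → Option ℝ} {t : ℝ}
    {l : List ν} : t ≤ loadFold I Γ t l := by
  induction l generalizing t with
  | nil => exact le_rfl
  | cons v l ih =>
    exact (le_max_left _ _).trans <| (le_add_of_nonneg_right (mul_nonneg (hμ v) hg)).trans ih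

theorem getD_le_loadFold (hμ : ∀ v, 0 ≤ I.μ v) (hg : 0 ≤ I.g) {Γ : ν → Option ℝ} {t : ℝ}
    {l : List ν} {v : ν} (hv : v ∈ l) : (Γ v).getD 0 ≤ loadFold I Γ t l := by
  induction l generalizing t with
  | nil => simp at hv
  | cons w l ih =>
    rcases List.mem_cons.mp hv with rfl | hv
    · exact (le_max_right _ _).trans <|
        (le_add_of_nonneg_right (mul_nonneg (hμ v) hg)).trans (le_loadFold hμ hg)
    · exact ih hv

/-- `st.1` are the processor clocks and `st.2` the times at which values become available in
slow memory. -/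
structure AsyncInv (I : Inst ν) (f : ν → ℝ) (c : Config ν I.P)
    (st : (Fin I.P → ℝ) × (ν → Option ℝ)) : Prop where
  cache : ∀ p, ∀ v ∈ c.R p, f v ≤ st.1 p
  avail : ∀ v t, st.2 v = some t → f v ≤ t ∧ ∃ p, t ≤ st.1 p
  slow : ∀ v ∈ c.B, st.2 v = none → f v ≤ 0

theorem AsyncInv.init {f : ν → ℝ} (hf : IsReadyTimeBound I f) {B₀ : Finset ν}
    (hB₀ : initB I B₀) : AsyncInv I f ⟨fun _ => ∅, B₀⟩ (fun _ => 0, fun _ => none) :=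
  ⟨fun _ _ hv => absurd hv (Finset.notMem_empty _), fun _ _ h => (nomatch h),
    fun v hv _ => hf.le_zero_of_isSource v ((hB₀ v).mp hv)⟩

variable [DecidableEq ν] {S : Superstep ν I.P} {st : (Fin I.P → ℝ) × (ν → Option ℝ)}

theorem asyncSS_fst (p : Fin I.P) :
    (asyncSS I S st).1 p = loadFold I (asyncSS I S st).2
      (st.1 p + listCost I (S.comp p) + ioCost I (S.save p)) (S.load p) :=
  rfl

theorem asyncSS_snd_eq_some (hμ : ∀ v, 0 ≤ I.μ v) (hg : 0 ≤ I.g) {v : ν} {t : ℝ}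
    (h : (asyncSS I S st).2 v = some t) :
    st.2 v = some t ∨ ∃ p, v ∈ S.save p ∧
      t ∈ Set.Icc (st.1 p + listCost I (S.comp p))
        (st.1 p + listCost I (S.comp p) + ioCost I (S.save p)) := by
  simp only [asyncSS, Option.orElse_eq_or, Option.or_eq_some_iff] at h
  rcases h with h | ⟨-, h⟩
  · exact .inl h
  · obtain ⟨l, hl, hvt⟩ := List.mem_flatten.mp (mem_of_minSaveTime_eq_some h)
    obtain ⟨p, -, rfl⟩ := List.mem_map.mp hl
    refine .inr ⟨p, ?_, snd_mem_Icc_of_mem_saveFinishes hμ hg hvt⟩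
    rw [← map_fst_saveFinishes (I := I) (st.1 p + listCost I (S.comp p)) (S.save p)]
    exact List.mem_map_of_mem (f := Prod.fst) hvt

theorem asyncSS_snd_eq_none {v : ν} (h : (asyncSS I S st).2 v = none) :
    st.2 v = none ∧ ∀ p, v ∉ S.save p := by
  simp only [asyncSS, Option.orElse_eq_or, Option.or_eq_none_iff, minSaveTime_eq_none_iff] at h
  refine ⟨h.1, fun p hp => ?_⟩
  rw [← map_fst_saveFinishes (I := I) (st.1 p + listCost I (S.comp p)) (S.save p)] at hp
  obtain ⟨e, he, rfl⟩ := List.mem_map.mp hp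
  exact h.2 e (List.mem_flatten.mpr ⟨_, List.mem_map.mpr ⟨p, List.mem_finRange p, rfl⟩, he⟩) rfl

theorem le_asyncSS_fst (hω : ∀ v, 0 ≤ I.ω v) (hμ : ∀ v, 0 ≤ I.μ v) (hg : 0 ≤ I.g)
    (p : Fin I.P) : st.1 p ≤ (asyncSS I S st).1 p := by
  rw [asyncSS_fst]
  have := listCost_nonneg hω hμ hg (S.comp p)
  have := ioCost_nonneg hμ hg (S.save p)
  exact le_trans (by linarith) (le_loadFold hμ hg)

theorem le_asyncRun_fst (hω : ∀ v, 0 ≤ I.ω v) (hμ : ∀ v, 0 ≤ I.μ v) (hg : 0 ≤ I.g)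
    (sched : Schedule ν I.P) (st : (Fin I.P → ℝ) × (ν → Option ℝ)) (p : Fin I.P) :
    st.1 p ≤ (asyncRun I st sched).1 p := by
  induction sched generalizing st with
  | nil => exact le_rfl
  | cons S sched ih => exact (le_asyncSS_fst hω hμ hg p).trans (ih _)

theorem asyncCost_nonneg (hω : ∀ v, 0 ≤ I.ω v) (hμ : ∀ v, 0 ≤ I.μ v) (hg : 0 ≤ I.g)
    (sched : Schedule ν I.P) : 0 ≤ asyncCost I sched :=
  Real.iSup_nonneg fun p => le_asyncRun_fst hω hμ hg sched (fun _ => 0, fun _ => none) p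

theorem asyncRun_fst_le_asyncCost (sched : Schedule ν I.P) (p : Fin I.P) :
    (asyncRun I (fun _ => 0, fun _ => none) sched).1 p ≤ asyncCost I sched :=
  le_ciSup (Set.finite_range _).bddAbove p

theorem AsyncInv.step (hω : ∀ v, 0 ≤ I.ω v) (hμ : ∀ v, 0 ≤ I.μ v) (hg : 0 ≤ I.g)
    {f : ν → ℝ} (hf : IsReadyTimeBound I f) {c : Config ν I.P} (hS : ssValid I c S)
    (h : AsyncInv I f c st) : AsyncInv I f (stepConfig c S) (asyncSS I S st) := by
  obtain ⟨hcompOnly, hcompValid, hsave, hload, -⟩ := hS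
  have hcomp : ∀ p, ∀ v ∈ afterComp c S p, f v ≤ st.1 p + listCost I (S.comp p) := fun p =>
    le_run_add_listCost hω hf (hcompOnly p) (hcompValid p) (h.cache p)
  have havail : ∀ v t, (asyncSS I S st).2 v = some t →
      f v ≤ t ∧ ∃ p, t ≤ st.1 p + listCost I (S.comp p) + ioCost I (S.save p) := by
    intro v t hvt
    rcases asyncSS_snd_eq_some hμ hg hvt with hold | ⟨p, hvp, hlo, hhi⟩
    · obtain ⟨hft, p, htp⟩ := h.avail v t hold
      have := listCost_nonneg hω hμ hg (S.comp p)
      have := ioCost_nonneg hμ hg (S.save p)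
      exact ⟨hft, p, by linarith⟩
    · exact ⟨(hcomp p v (hsave p v hvp)).trans hlo, p, hhi⟩
  have hslow : ∀ v ∈ newB c S, (asyncSS I S st).2 v = none → f v ≤ 0 := by
    intro v hv hnone
    obtain ⟨hold, hunsaved⟩ := asyncSS_snd_eq_none hnone
    refine h.slow v ?_ hold
    simpa [newB, hunsaved] using hv
  refine ⟨fun p v hv => ?_, fun v t hvt => ?_, hslow⟩
  · rw [asyncSS_fst]
    rcases Finset.mem_union.mp hv with hkept | hloaded
    · exact (hcomp p v (foldl_erase_subset _ _ hkept)).trans <|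
        (le_add_of_nonneg_right (ioCost_nonneg hμ hg _)).trans (le_loadFold hμ hg)
    · have hloaded := List.mem_toFinset.mp hloaded
      refine le_trans ?_ (getD_le_loadFold hμ hg hloaded)
      cases hΓ : (asyncSS I S st).2 v with
      | none => exact hslow v (hload p v hloaded) hΓ
      | some t => exact (havail v t hΓ).1
  · obtain ⟨hft, p, htp⟩ := havail v t hvt
    exact ⟨hft, p, htp.trans (by rw [asyncSS_fst]; exact le_loadFold hμ hg)⟩

theorem AsyncInv.run (hω : ∀ v, 0 ≤ I.ω v) (hμ : ∀ v, 0 ≤ I.μ v) (hg : 0 ≤ I.g)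
    {f : ν → ℝ} (hf : IsReadyTimeBound I f) {sched : Schedule ν I.P} {c : Config ν I.P}
    {st : (Fin I.P → ℝ) × (ν → Option ℝ)} (hsched : schedValidFrom I c sched)
    (h : AsyncInv I f c st) : AsyncInv I f (runSched c sched) (asyncRun I st sched) := by
  induction sched generalizing c st with
  | nil => exact h
  | cons S sched ih => exact ih hsched.2 (h.step hω hμ hg hf hsched.1)

theorem le_asyncCost_of_mem_runSched (hω : ∀ v, 0 ≤ I.ω v) (hμ : ∀ v, 0 ≤ I.μ v)
    (hg : 0 ≤ I.g) {f : ν → ℝ} (hf : IsReadyTimeBound I f) {sched : Schedule ν I.P}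
    {B₀ : Finset ν} (hB₀ : initB I B₀) (hsched : schedValidFrom I ⟨fun _ => ∅, B₀⟩ sched)
    {v : ν} (hv : v ∈ (runSched (⟨fun _ => ∅, B₀⟩ : Config ν I.P) sched).B) :
    f v ≤ asyncCost I sched := by
  have h := AsyncInv.run hω hμ hg hf hsched (AsyncInv.init hf hB₀)
  cases hΓ : (asyncRun I (fun _ => 0, fun _ => none) sched).2 v with
  | none => exact (h.slow v hv hΓ).trans (asyncCost_nonneg hω hμ hg sched)
  | some t =>
    obtain ⟨hft, p, htp⟩ := h.avail v t hΓ
    exact hft.trans (htp.trans (asyncRun_fst_le_asyncCost sched p))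

end Schedule

theorem statement_14_general {ν : Type} [Fintype ν] [DecidableEq ν] (I : Inst ν)
    (hω : ∀ v, 0 ≤ I.ω v) (hμ : ∀ v, 0 ≤ I.μ v) (hg : 0 ≤ I.g)
    (hac : Acyclic I)
    (sched : Schedule ν I.P) (hval : Valid I sched) :
    ∀ path : List ν, path.Chain' I.edge →
      (path.map (Set.indicator {v | ¬ isSource I v} I.ω)).sum ≤ asyncCost I sched := by
  intro path hpath
  obtain ⟨B₀, hB₀, hsched, hsinks⟩ := hval
  have hwf := hac.wellFounded
  cases path with
  | nil => simpa using asyncCost_nonneg hω hμ hg sched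
  | cons v l =>
    obtain ⟨s, hs, hle⟩ :=
      exists_isSink_maxPathWeight_le hwf hac.wellFounded_swap hω (l.getLastD v)
    calc _ ≤ maxPathWeight I hwf (l.getLastD v) := sum_indicator_le_maxPathWeight hwf hω hpath
      _ ≤ maxPathWeight I hwf s := hle
      _ ≤ asyncCost I sched := le_asyncCost_of_mem_runSched hω hμ hg
          (isReadyTimeBound_maxPathWeight hwf) hB₀ hsched (hsinks s hs)

/-- For every MBSP instance and valid schedule, the asynchronous
cost is at least `Σ ω(w_i)` over the non-source nodes of any directed path
`(w_1,…,w_k)` of the DAG (hence at least the maximum over all directed paths). -/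
theorem statement_14 {ν : Type} [Fintype ν] [DecidableEq ν] (I : Inst ν)
    (hω : ∀ v, 0 ≤ I.ω v) (hμ : ∀ v, 0 ≤ I.μ v) (hr : 0 ≤ I.r) (hg : 0 ≤ I.g)
    (hL : 0 ≤ I.L) (hac : Acyclic I)
    (sched : Schedule ν I.P) (hval : Valid I sched) :
    ∀ path : List ν, path.Chain' I.edge →
      (path.map (Set.indicator {v | ¬ isSource I v} I.ω)).sum ≤ asyncCost I sched :=
  statement_14_general I hω hμ hg hac sched hval

end MBSP
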